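/- arXiv:2601.17677 — 7 statements merged into one kernel-verified Lean document; each statement's English description precedes it below -/
import Mathlib

section
/- Let B be a bicategory, and let G' : a ⟶ b and G'' : b ⟶ c be 1-morphisms. Suppose G' admits an honest right adjoint H' : b ⟶ a (i.e., there is an adjunction G' ⊣ H' in B with unit and counit satisfying the triangle identities), and suppose (H'', ε'') is a weak right adjoint of G''. Then the pair consisting of the 1-morphism H'' ≫ H' : c ⟶ a together with the 2-morphism ε''' : (H'' ≫ H') ≫ (G' ≫ G'') ⟶ 𝟙 c obtained by first contracting H' against G' using the counit ε' of the adjunction G' ⊣ H' and then applying ε'', is a weak right adjoint of the composite G' ≫ G'' : a ⟶ c. -/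
/-!
Since `G' ⊣ H'`, 2-morphisms `J ⟶ H'' ≫ H'` correspond bijectively to 2-morphisms
`J ≫ G' ⟶ H''` (this is `Adjunction.homEquiv₂`), and by weak adjointness of `(H'', ε'')` these
correspond bijectively to 2-morphisms `(J ≫ G') ≫ G'' ⟶ 𝟙 c`. Up to an associator, the composite
bijection is `θ ↦ (θ ▷ (G' ≫ G'')) ≫ ε'''`.
-/

open CategoryTheory Bicategory

def IsWeakRightAdjoint {B : Type*} [Bicategory B] {a b : B} (G : a ⟶ b)
    (H : b ⟶ a) (ε₀ : H ≫ G ⟶ 𝟙 b) : Prop :=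
  ∀ J : b ⟶ a, Function.Bijective (fun θ : J ⟶ H => (θ ▷ G) ≫ ε₀)

lemma whiskerRight_comp_counit_eq_homEquiv₂_symm {B : Type*} [Bicategory B] {a b c : B}
    {G' : a ⟶ b} {G'' : b ⟶ c} {H' : b ⟶ a} {H'' : c ⟶ b}
    (adj : G' ⊣ H') (ε'' : H'' ≫ G'' ⟶ 𝟙 c) {J : c ⟶ a} (θ : J ⟶ H'' ≫ H') :
    (θ ▷ (G' ≫ G'')) ≫ (α_ H'' H' (G' ≫ G'')).hom ≫
        H'' ◁ ((α_ H' G' G'').inv ≫ (adj.counit ▷ G'') ≫ (λ_ G'').hom) ≫ ε'' =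
      (α_ J G' G'').inv ≫ (adj.homEquiv₂.symm θ ▷ G'') ≫ ε'' := by
  simp only [Adjunction.homEquiv₂_symm_apply]
  bicategory

/-- If `G'` admits an honest right adjoint `H'` and `(H'', ε'')` is a weak right adjoint of
`G''`, then `(H'' ≫ H', ε''')` is a weak right adjoint of `G' ≫ G''`, where `ε'''` is
obtained by first contracting `H'` against `G'` using the counit of the adjunction and then
applying `ε''`. -/
theorem weak_right_adjoint_comp_of_right_adjoint {B : Type*} [Bicategory B] {a b c : B}
    (G' : a ⟶ b) (G'' : b ⟶ c) (H' : b ⟶ a) (H'' : c ⟶ b)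
    (adj : G' ⊣ H') (ε'' : H'' ≫ G'' ⟶ 𝟙 c) (hH'' : IsWeakRightAdjoint G'' H'' ε'') :
    IsWeakRightAdjoint (G' ≫ G'') (H'' ≫ H')
      ((α_ H'' H' (G' ≫ G'')).hom ≫
        H'' ◁ ((α_ H' G' G'').inv ≫ (adj.counit ▷ G'') ≫ (λ_ G'').hom) ≫ ε'') := by
  intro J
  have factor : (fun θ : J ⟶ H'' ≫ H' => (θ ▷ (G' ≫ G'')) ≫ (α_ H'' H' (G' ≫ G'')).hom ≫
        H'' ◁ ((α_ H' G' G'').inv ≫ (adj.counit ▷ G'') ≫ (λ_ G'').hom) ≫ ε'') =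
      (α_ J G' G'').homFromEquiv ∘ (fun ψ => (ψ ▷ G'') ≫ ε'') ∘ adj.homEquiv₂.symm :=
    funext (whiskerRight_comp_counit_eq_homEquiv₂_symm adj ε'')
  rw [factor]
  exact (α_ J G' G'').homFromEquiv.bijective.comp
    ((hH'' (J ≫ G')).comp adj.homEquiv₂.symm.bijective)
end

section
/- Let B be a bicategory, and let G' : a ⟶ b and G'' : b ⟶ c be 1-morphisms. Suppose (H', ε') is a weak right adjoint of G', suppose (H'', ε'') is a weak right adjoint of G'', and suppose additionally that H'' : c ⟶ b admits an honest right adjoint I'' : b ⟶ c in B. Then the pair consisting of H'' ≫ H' : c ⟶ a together with the composed counit (obtained by contracting first with ε' and then with ε'') is a weak right adjoint of the composite G' ≫ G'' : a ⟶ c. -/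
open CategoryTheory Bicategory

def IsRightKanLift {B : Type*} [Bicategory B] {a b c : B} (G : a ⟶ b) (K : c ⟶ b)
    (L : c ⟶ a) (ε₀ : L ≫ G ⟶ K) : Prop :=
  ∀ J : c ⟶ a, Function.Bijective fun θ : J ⟶ L => θ ▷ G ≫ ε₀

namespace CategoryTheory.Bicategory.Adjunction

variable {B : Type*} [Bicategory B] {a b c d : B} {l : b ⟶ c} {r : c ⟶ b} (adj : l ⊣ r)

lemma homEquiv₁_symm_comp {g : b ⟶ d} {h h' : c ⟶ d} (β : r ≫ g ⟶ h) (f : h ⟶ h') :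
    adj.homEquiv₁.symm (β ≫ f) = adj.homEquiv₁.symm β ≫ l ◁ f := by
  simp only [homEquiv₁_symm_apply, whiskerLeft_comp, Category.assoc]

lemma homEquiv₁_symm_whiskerRight {g : b ⟶ d} {h : c ⟶ d} (β : r ≫ g ⟶ h) (k : d ⟶ a) :
    adj.homEquiv₁.symm ((α_ r g k).inv ≫ β ▷ k) =
      adj.homEquiv₁.symm β ▷ k ≫ (α_ l h k).hom := by
  simp only [homEquiv₁_symm_apply]
  bicategory

end CategoryTheory.Bicategory.Adjunction

namespace IsRightKanLift

variable {B : Type*} [Bicategory B] {a b c d : B} {G : a ⟶ b}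

lemma comp_iso {K K' : c ⟶ b} {L : c ⟶ a} {ε₀ : L ≫ G ⟶ K} (h : IsRightKanLift G K L ε₀)
    (e : K ≅ K') :
    IsRightKanLift G K' L (ε₀ ≫ e.hom) := by
  intro J
  have hfactor : (fun θ : J ⟶ L => θ ▷ G ≫ ε₀ ≫ e.hom) =
      e.homToEquiv ∘ fun θ => θ ▷ G ≫ ε₀ := by
    funext θ
    simp only [Function.comp_apply, Iso.homToEquiv_apply, Category.assoc]
  rw [hfactor]
  exact e.homToEquiv.bijective.comp (h J)

lemma comp {G' : b ⟶ d} {K : c ⟶ d} {L' : c ⟶ b} {L : c ⟶ a} {ε' : L' ≫ G' ⟶ K}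
    {ε₀ : L ≫ G ⟶ L'}
    (h' : IsRightKanLift G' K L' ε') (h : IsRightKanLift G L' L ε₀) :
    IsRightKanLift (G ≫ G') K L ((α_ L G G').inv ≫ ε₀ ▷ G' ≫ ε') := by
  intro J
  have hfactor : (fun θ : J ⟶ L => θ ▷ (G ≫ G') ≫ (α_ L G G').inv ≫ ε₀ ▷ G' ≫ ε') =
      (α_ J G G').homFromEquiv ∘ (fun ψ => ψ ▷ G' ≫ ε') ∘ fun θ => θ ▷ G ≫ ε₀ := by
    funext θ
    simp only [Function.comp_apply, Iso.homFromEquiv_apply, comp_whiskerRight, whiskerRight_comp,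
      Category.assoc, Iso.hom_inv_id_assoc]
  rw [hfactor]
  exact (α_ J G G').homFromEquiv.bijective.comp ((h' (J ≫ G)).comp (h J))

lemma whiskerLeft {K : d ⟶ b} {L : d ⟶ a} {ε₀ : L ≫ G ⟶ K} (h : IsRightKanLift G K L ε₀)
    {l : c ⟶ d} {r : d ⟶ c} (adj : l ⊣ r) :
    IsRightKanLift G (l ≫ K) (l ≫ L) ((α_ l L G).hom ≫ l ◁ ε₀) := by
  intro J
  have hfactor : (fun θ : J ⟶ l ≫ L => θ ▷ G ≫ (α_ l L G).hom ≫ l ◁ ε₀) =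
      adj.homEquiv₁.symm ∘ (α_ r J G).homFromEquiv ∘ (fun ψ => ψ ▷ G ≫ ε₀) ∘
        adj.homEquiv₁ := by
    funext θ
    rw [Function.comp_apply, Function.comp_apply, Function.comp_apply, Iso.homFromEquiv_apply,
      ← Category.assoc (α_ r J G).inv, adj.homEquiv₁_symm_comp, adj.homEquiv₁_symm_whiskerRight,
      Equiv.symm_apply_apply, Category.assoc]
  rw [hfactor]
  exact adj.homEquiv₁.symm.bijective.comp ((α_ r J G).homFromEquiv.bijective.comp
    ((h (r ≫ J)).comp adj.homEquiv₁.bijective))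

end IsRightKanLift

/-- If `(H', ε')` and `(H'', ε'')` are weak right adjoints of `G'` and `G''` respectively,
and `H''` admits an honest right adjoint `I''` in the bicategory, then
`(H'' ≫ H', ε''')` is a weak right adjoint of `G' ≫ G''`, where `ε'''` is the composed
counit obtained by contracting first with `ε'` and then with `ε''`. -/
theorem weak_right_adjoint_comp_of_coadjoint {B : Type*} [Bicategory B] {a b c : B}
    (G' : a ⟶ b) (G'' : b ⟶ c) (H' : b ⟶ a) (H'' : c ⟶ b) (I'' : b ⟶ c)
    (ε' : H' ≫ G' ⟶ 𝟙 b) (hH' : IsWeakRightAdjoint G' H' ε')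
    (ε'' : H'' ≫ G'' ⟶ 𝟙 c) (hH'' : IsWeakRightAdjoint G'' H'' ε'')
    (adj : H'' ⊣ I'') :
    IsWeakRightAdjoint (G' ≫ G'') (H'' ≫ H')
      ((α_ H'' H' (G' ≫ G'')).hom ≫
        H'' ◁ ((α_ H' G' G'').inv ≫ (ε' ▷ G'') ≫ (λ_ G'').hom) ≫ ε'') := by
  have hlift : IsRightKanLift G' H'' (H'' ≫ H')
      ((α_ H'' H' G').hom ≫ H'' ◁ ε' ≫ (ρ_ H'').hom) := by
    simpa only [Category.assoc] using
      ((show IsRightKanLift G' (𝟙 b) H' ε' from hH').whiskerLeft adj).comp_iso (ρ_ H'')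
  have hcounit : (α_ H'' H' (G' ≫ G'')).hom ≫
        H'' ◁ ((α_ H' G' G'').inv ≫ (ε' ▷ G'') ≫ (λ_ G'').hom) ≫ ε'' =
      (α_ (H'' ≫ H') G' G'').inv ≫
        ((α_ H'' H' G').hom ≫ H'' ◁ ε' ≫ (ρ_ H'').hom) ▷ G'' ≫ ε'' := by
    bicategory
  rw [hcounit]
  exact IsRightKanLift.comp (show IsRightKanLift G'' (𝟙 c) H'' ε'' from hH'') hlift
end

section
/- Let B be a bicategory and G : a ⟶ b a 1-morphism. Suppose: (1) the functor g_b : Hom(b,a) ⥤ Hom(b,b) given by J ↦ J ≫ G admits a right adjoint h_b; (2) the functor g_a : Hom(a,a) ⥤ Hom(a,b) given by K ↦ K ≫ G admits a right adjoint h_a; and (3) the canonical 2-morphism G ≫ h_b(𝟙 b) ⟶ h_a(G) (adjoint under g_a ⊣ h_a to the 2-morphism (G ≫ h_b(𝟙 b)) ≫ G ⟶ G induced by the counit (h_b(𝟙 b)) ≫ G ⟶ 𝟙 b of g_b ⊣ h_b) induces a bijection on 2-morphisms out of 𝟙 a, i.e., the induced map from 2-morphisms 𝟙 a ⟶ G ≫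 h_b(𝟙 b) to 2-morphisms 𝟙 a ⟶ h_a(G) is a bijection. Then G admits a right adjoint in B, given by H := h_b(𝟙 b), with counit the counit of g_b ⊣ h_b at 𝟙 b and unit the 2-morphism 𝟙 a ⟶ G ≫ H corresponding under condition (3) to the unit of g_a ⊣ h_a at 𝟙 a. -/
/-!
Write `H = h_b(𝟙 b)` and `ϵ : H ≫ G ⟶ 𝟙 b` for the counit of `g_b ⊣ h_b` at `𝟙 b`. The unit `η`
is the preimage of the unit of `g_a ⊣ h_a` under the bijection, and transposing its defining
equation back along `g_a ⊣ h_a` is exactly the left triangle identity. Since `ϵ` is universal,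
2-morphisms into `H` are detected by whiskering with `G` and composing with `ϵ`; after this
operation the right zigzag reduces to the left one, which gives the right triangle identity.
-/

open CategoryTheory Bicategory

variable {B : Type*} [Bicategory B]

/-- The canonical 2-morphism `G ≫ h_b(𝟙 b) ⟶ h_a(G)`, adjoint under `g_a ⊣ h_a` to the
2-morphism `(G ≫ h_b(𝟙 b)) ≫ G ⟶ G` induced by the counit of `g_b ⊣ h_b` at `𝟙 b`. -/
noncomputable def canonicalComparison {a b : B} (G : a ⟶ b)
    (hB : (b ⟶ b) ⥤ (b ⟶ a)) (adjB : Bicategory.postcomp b G ⊣ hB)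
    (hA : (a ⟶ b) ⥤ (a ⟶ a)) (adjA : Bicategory.postcomp a G ⊣ hA) :
    G ≫ hB.obj (𝟙 b) ⟶ hA.obj G :=
  adjA.homEquiv (G ≫ hB.obj (𝟙 b)) G
    ((α_ G (hB.obj (𝟙 b)) G).hom ≫ G ◁ adjB.counit.app (𝟙 b) ≫ (ρ_ G).hom)

section

variable {a b : B} {G : a ⟶ b} {H : b ⟶ a}

lemma postcomp_homEquiv_leftZigzag {R : (a ⟶ b) ⥤ (a ⟶ a)} (adj : postcomp a G ⊣ R)
    (η : 𝟙 a ⟶ G ≫ H) (ϵ : H ≫ G ⟶ 𝟙 b) :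
    adj.homEquiv (𝟙 a) G (leftZigzag η ϵ ≫ (ρ_ G).hom) =
      η ≫ adj.homEquiv (G ≫ H) G ((α_ G H G).hom ≫ G ◁ ϵ ≫ (ρ_ G).hom) := by
  have hzigzag : leftZigzag η ϵ ≫ (ρ_ G).hom =
      (postcomp a G).map η ≫ (α_ G H G).hom ≫ G ◁ ϵ ≫ (ρ_ G).hom := by
    change (η ▷ G ⊗≫ G ◁ ϵ) ≫ (ρ_ G).hom = η ▷ G ≫ (α_ G H G).hom ≫ G ◁ ϵ ≫ (ρ_ G).hom
    bicategory
  erw [hzigzag, Adjunction.homEquiv_naturality_left]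

lemma left_triangle_of_postcomp_homEquiv {R : (a ⟶ b) ⥤ (a ⟶ a)} (adj : postcomp a G ⊣ R)
    {η : 𝟙 a ⟶ G ≫ H} {ϵ : H ≫ G ⟶ 𝟙 b}
    (h : η ≫ adj.homEquiv (G ≫ H) G ((α_ G H G).hom ≫ G ◁ ϵ ≫ (ρ_ G).hom) =
      adj.unit.app (𝟙 a) ≫ R.map (λ_ G).hom) :
    leftZigzag η ϵ = (λ_ G).hom ≫ (ρ_ G).inv := by
  have htranspose : adj.homEquiv (𝟙 a) G (leftZigzag η ϵ ≫ (ρ_ G).hom) =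
      adj.homEquiv (𝟙 a) G (λ_ G).hom := by
    rw [postcomp_homEquiv_leftZigzag, h]
    erw [Adjunction.homEquiv_unit]
  rw [← (adj.homEquiv (𝟙 a) G).injective htranspose]
  bicategory

lemma right_triangle_of_left_triangle_of_injective {η : 𝟙 a ⟶ G ≫ H} {ϵ : H ≫ G ⟶ 𝟙 b}
    (hϵ : Function.Injective fun f : H ⟶ H => f ▷ G ≫ ϵ)
    (h : leftZigzag η ϵ = (λ_ G).hom ≫ (ρ_ G).inv) :
    rightZigzag η ϵ = (ρ_ H).hom ≫ (λ_ H).inv := by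
  suffices hid : ((ρ_ H).inv ≫ rightZigzag η ϵ ≫ (λ_ H).hom) ▷ G ≫ ϵ = 𝟙 H ▷ G ≫ ϵ by
    rw [← cancel_epi (ρ_ H).inv, ← cancel_mono (λ_ H).hom, Category.assoc, hϵ hid]
    simp
  calc ((ρ_ H).inv ≫ rightZigzag η ϵ ≫ (λ_ H).hom) ▷ G ≫ ϵ
      = 𝟙 _ ⊗≫ H ◁ η ▷ G ⊗≫ (ϵ ▷ (H ≫ G) ≫ 𝟙 b ◁ ϵ) ⊗≫ 𝟙 _ := by
        bicategory
    _ = 𝟙 _ ⊗≫ H ◁ η ▷ G ⊗≫ ((H ≫ G) ◁ ϵ ≫ ϵ ▷ 𝟙 b) ⊗≫ 𝟙 _ := by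
        rw [whisker_exchange]
    _ = 𝟙 _ ⊗≫ H ◁ leftZigzag η ϵ ⊗≫ ϵ ⊗≫ 𝟙 _ := by
        bicategory
    _ = 𝟙 H ▷ G ≫ ϵ := by
        rw [h]; bicategory

lemma injective_whiskerRight_comp_counit {R : (b ⟶ b) ⥤ (b ⟶ a)} (adj : postcomp b G ⊣ R)
    (Y : b ⟶ a) (X : b ⟶ b) :
    Function.Injective fun f : Y ⟶ R.obj X => f ▷ G ≫ adj.counit.app X := by
  intro f g hfg
  apply (adj.homEquiv Y X).symm.injective
  simp only [Adjunction.homEquiv_counit]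
  exact hfg

end

/-- If postcomposition with `G` on `Hom(b,a)` and on `Hom(a,a)` admits right adjoints `h_b`
and `h_a`, and the canonical 2-morphism `G ≫ h_b(𝟙 b) ⟶ h_a(G)` induces a bijection on
2-morphisms out of `𝟙 a`, then `G` admits a right adjoint `h_b(𝟙 b)` in the bicategory,
with counit the counit of `g_b ⊣ h_b` at `𝟙 b` and unit corresponding to the unit of
`g_a ⊣ h_a` at `𝟙 a`. -/
theorem right_adjoint_of_pointwise_criterion {a b : B} (G : a ⟶ b)
    (hB : (b ⟶ b) ⥤ (b ⟶ a)) (adjB : Bicategory.postcomp b G ⊣ hB)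
    (hA : (a ⟶ b) ⥤ (a ⟶ a)) (adjA : Bicategory.postcomp a G ⊣ hA)
    (hbij : Function.Bijective
      (fun θ : 𝟙 a ⟶ G ≫ hB.obj (𝟙 b) => θ ≫ canonicalComparison G hB adjB hA adjA)) :
    ∃ adj : Bicategory.Adjunction G (hB.obj (𝟙 b)),
      adj.counit = adjB.counit.app (𝟙 b) ∧
      adj.unit ≫ canonicalComparison G hB adjB hA adjA =
        adjA.unit.app (𝟙 a) ≫ hA.map (λ_ G).hom := by
  obtain ⟨η, hη⟩ := hbij.2 (adjA.unit.app (𝟙 a) ≫ hA.map (λ_ G).hom)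
  have left := left_triangle_of_postcomp_homEquiv adjA hη
  have right := right_triangle_of_left_triangle_of_injective
    (injective_whiskerRight_comp_counit adjB _ _) left
  exact ⟨⟨η, _, left, right⟩, rfl, hη⟩
end

section
/- Let C be an idempotent complete symmetric monoidal category, and let X, Y be objects of C. If the monoidal unit 𝟙 is a retract of X and the object X ⊗ Y is dualizable, then Y is dualizable. -/
open CategoryTheory MonoidalCategory

/-!
Tensoring the retraction `𝟙 ⟶ X ⟶ 𝟙` with `Y` exhibits `Y ≅ 𝟙 ⊗ Y` as a retract of `X ⊗ Y`, so it
suffices that dualizable objects are closed under retracts. If `Y` is a retract of `Z` with dual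
`Z*`, the adjoint mate of the idempotent `Z ⟶ Y ⟶ Z` is an idempotent on `Z*`; it splits through
some `W`, and restricting the (co)evaluation of `Z* ⊣ Z` along the two retractions makes `W` a
dual of `Y`.
-/

namespace CategoryTheory

variable {C : Type*} [Category C] [MonoidalCategory C]

section Retract

variable {Z Zd Y W : C} [ExactPairing Zd Z] (hY : Retract Y Z) (hW : Retract W Zd)

lemma ExactPairing.coevaluation_evaluation_of_retract
    (hmate : η_ Zd Z ≫ Zd ◁ (hY.r ≫ hY.i) = η_ Zd Z ≫ (hW.r ≫ hW.i) ▷ Z) :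
    Y ◁ (η_ Zd Z ≫ (hW.r ⊗ₘ hY.r)) ≫ (α_ Y W Y).inv ≫ ((hY.i ⊗ₘ hW.i) ≫ ε_ Zd Z) ▷ Y =
      (ρ_ Y).hom ≫ (λ_ Y).inv := by
  obtain ⟨i, r, hir⟩ := hY
  obtain ⟨s, p, hsp⟩ := hW
  dsimp only at hmate ⊢
  have hqr : Zd ◁ (r ≫ i) ≫ Zd ◁ r = Zd ◁ r := by
    rw [← MonoidalCategory.whiskerLeft_comp, Category.assoc, hir, Category.comp_id]
  calc
    Y ◁ (η_ Zd Z ≫ (p ⊗ₘ r)) ≫ (α_ Y W Y).inv ≫ ((i ⊗ₘ s) ≫ ε_ Zd Z) ▷ Y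
      = 𝟙 _ ⊗≫ (Y ◁ (η_ Zd Z ≫ p ▷ Z ≫ W ◁ r) ≫ i ▷ (W ⊗ Y)) ⊗≫
          (Z ◁ s) ▷ Y ⊗≫ ε_ Zd Z ▷ Y := by
      rw [MonoidalCategory.tensorHom_def p r, MonoidalCategory.tensorHom_def i s]; monoidal
    _ = 𝟙 _ ⊗≫ i ▷ 𝟙_ C ⊗≫ Z ◁ (η_ Zd Z ≫ p ▷ Z ≫ (W ◁ r ≫ s ▷ Y)) ⊗≫ ε_ Zd Z ▷ Y := by
      rw [whisker_exchange]; monoidal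
    _ = 𝟙 _ ⊗≫ i ▷ 𝟙_ C ⊗≫ Z ◁ ((η_ Zd Z ≫ (p ≫ s) ▷ Z) ≫ Zd ◁ r) ⊗≫ ε_ Zd Z ▷ Y := by
      rw [whisker_exchange, comp_whiskerRight]; monoidal
    _ = 𝟙 _ ⊗≫ i ▷ 𝟙_ C ⊗≫ Z ◁ (η_ Zd Z ≫ Zd ◁ r) ⊗≫ ε_ Zd Z ▷ Y := by
      rw [← hmate, Category.assoc, hqr]
    _ = 𝟙 _ ⊗≫ i ▷ 𝟙_ C ⊗≫ Z ◁ η_ Zd Z ⊗≫ ((Z ⊗ Zd) ◁ r ≫ ε_ Zd Z ▷ Y) ⊗≫ 𝟙 _ := by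
      monoidal
    _ = 𝟙 _ ⊗≫ i ▷ 𝟙_ C ⊗≫ (Z ◁ η_ Zd Z ≫ (α_ Z Zd Z).inv ≫ ε_ Zd Z ▷ Z) ⊗≫
          𝟙_ C ◁ r ⊗≫ 𝟙 _ := by
      rw [whisker_exchange]; monoidal
    _ = (ρ_ Y).hom ≫ (i ≫ r) ≫ (λ_ Y).inv := by
      rw [ExactPairing.coevaluation_evaluation]; monoidal
    _ = (ρ_ Y).hom ≫ (λ_ Y).inv := by
      rw [hir, Category.id_comp]

lemma ExactPairing.evaluation_coevaluation_of_retract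
    (hmate : η_ Zd Z ≫ Zd ◁ (hY.r ≫ hY.i) = η_ Zd Z ≫ (hW.r ≫ hW.i) ▷ Z) :
    (η_ Zd Z ≫ (hW.r ⊗ₘ hY.r)) ▷ W ≫ (α_ W Y W).hom ≫ W ◁ ((hY.i ⊗ₘ hW.i) ≫ ε_ Zd Z) =
      (λ_ W).hom ≫ (ρ_ W).inv := by
  obtain ⟨i, r, hir⟩ := hY
  obtain ⟨s, p, hsp⟩ := hW
  dsimp only at hmate ⊢
  have hps : (p ≫ s) ▷ Z ≫ p ▷ Z = p ▷ Z := by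
    rw [← comp_whiskerRight, Category.assoc, hsp, Category.comp_id]
  calc
    (η_ Zd Z ≫ (p ⊗ₘ r)) ▷ W ≫ (α_ W Y W).hom ≫ W ◁ ((i ⊗ₘ s) ≫ ε_ Zd Z)
      = 𝟙 _ ⊗≫ η_ Zd Z ▷ W ⊗≫ ((p ▷ Z ≫ W ◁ (r ≫ i)) ▷ W) ⊗≫
          (W ⊗ Z) ◁ s ⊗≫ W ◁ ε_ Zd Z ⊗≫ 𝟙 _ := by
      rw [MonoidalCategory.tensorHom_def p r, MonoidalCategory.tensorHom_def i s,
        MonoidalCategory.whiskerLeft_comp]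
      monoidal
    _ = 𝟙 _ ⊗≫ ((η_ Zd Z ≫ Zd ◁ (r ≫ i)) ▷ W) ⊗≫ (p ▷ Z) ▷ W ⊗≫
          (W ⊗ Z) ◁ s ⊗≫ W ◁ ε_ Zd Z ⊗≫ 𝟙 _ := by
      rw [← whisker_exchange]; monoidal
    _ = 𝟙 _ ⊗≫ η_ Zd Z ▷ W ⊗≫ (((p ≫ s) ▷ Z ≫ p ▷ Z) ▷ W) ⊗≫
          (W ⊗ Z) ◁ s ⊗≫ W ◁ ε_ Zd Z ⊗≫ 𝟙 _ := by
      rw [hmate]; monoidal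
    _ = 𝟙 _ ⊗≫ η_ Zd Z ▷ W ⊗≫ ((p ▷ Z) ▷ W ≫ (W ⊗ Z) ◁ s) ⊗≫ W ◁ ε_ Zd Z ⊗≫ 𝟙 _ := by
      rw [hps]; monoidal
    _ = 𝟙 _ ⊗≫ (η_ Zd Z ▷ W ≫ (Zd ⊗ Z) ◁ s) ⊗≫ (p ▷ (Z ⊗ Zd) ≫ W ◁ ε_ Zd Z) ⊗≫ 𝟙 _ := by
      rw [← whisker_exchange]; monoidal
    _ = 𝟙 _ ⊗≫ (𝟙_ C ◁ s ≫ η_ Zd Z ▷ Zd) ⊗≫ (Zd ◁ ε_ Zd Z ≫ p ▷ 𝟙_ C) ⊗≫ 𝟙 _ := by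
      rw [← whisker_exchange, ← whisker_exchange]
    _ = 𝟙 _ ⊗≫ 𝟙_ C ◁ s ⊗≫ (η_ Zd Z ▷ Zd ≫ (α_ Zd Z Zd).hom ≫ Zd ◁ ε_ Zd Z) ⊗≫
          p ▷ 𝟙_ C ⊗≫ 𝟙 _ := by
      monoidal
    _ = (λ_ W).hom ≫ (s ≫ p) ≫ (ρ_ W).inv := by
      rw [ExactPairing.evaluation_coevaluation]; monoidal
    _ = (λ_ W).hom ≫ (ρ_ W).inv := by
      rw [hsp, Category.id_comp]

abbrev ExactPairing.ofRetract
    (hmate : η_ Zd Z ≫ Zd ◁ (hY.r ≫ hY.i) = η_ Zd Z ≫ (hW.r ≫ hW.i) ▷ Z) :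
    ExactPairing W Y where
  coevaluation' := η_ Zd Z ≫ (hW.r ⊗ₘ hY.r)
  evaluation' := (hY.i ⊗ₘ hW.i) ≫ ε_ Zd Z
  coevaluation_evaluation' := coevaluation_evaluation_of_retract hY hW hmate
  evaluation_coevaluation' := evaluation_coevaluation_of_retract hY hW hmate

end Retract

theorem Retract.exists_exactPairing [IsIdempotentComplete C] {Y Z : C} (hY : Retract Y Z)
    (Zd : C) [ExactPairing Zd Z] : ∃ W : C, Nonempty (ExactPairing W Y) := by
  let _ : HasLeftDual Z := ⟨Zd⟩
  have idem : (leftAdjointMate (hY.r ≫ hY.i) : Zd ⟶ Zd) ≫ leftAdjointMate (hY.r ≫ hY.i) =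
      leftAdjointMate (hY.r ≫ hY.i) := by
    rw [← comp_leftAdjointMate]
    simp
  obtain ⟨W, s, p, hsp, hps⟩ := IsIdempotentComplete.idempotents_split Zd _ idem
  refine ⟨W, ⟨ExactPairing.ofRetract hY ⟨s, p, hsp⟩ ?_⟩⟩
  rw [hps]
  exact (coevaluation_comp_leftAdjointMate _).symm

end CategoryTheory

theorem dualizable_of_unit_retract_general {C : Type*} [Category C] [MonoidalCategory C]
    [IsIdempotentComplete C]
    (X Y : C) (u : 𝟙_ C ⟶ X) (t : X ⟶ 𝟙_ C) (hut : u ≫ t = 𝟙 (𝟙_ C))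
    (hXY : ∃ Zd : C, Nonempty (ExactPairing Zd (X ⊗ Y))) :
    ∃ Yd : C, Nonempty (ExactPairing Yd Y) := by
  obtain ⟨Zd, ⟨pairing⟩⟩ := hXY
  let unitRetract : Retract (𝟙_ C) X := ⟨u, t, hut⟩
  let retract : Retract Y (X ⊗ Y) :=
    (Retract.ofIso (λ_ Y).symm).trans (unitRetract.map (tensorRight Y))
  exact retract.exists_exactPairing Zd

/-- In an idempotent complete symmetric monoidal category, if the unit `𝟙` is a retract of
`X` and `X ⊗ Y` is dualizable, then `Y` is dualizable. -/
theorem dualizable_of_unit_retract {C : Type*} [Category C] [MonoidalCategory C]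
    [SymmetricCategory C] [IsIdempotentComplete C]
    (X Y : C) (u : 𝟙_ C ⟶ X) (t : X ⟶ 𝟙_ C) (hut : u ≫ t = 𝟙 (𝟙_ C))
    (hXY : ∃ Zd : C, Nonempty (ExactPairing Zd (X ⊗ Y))) :
    ∃ Yd : C, Nonempty (ExactPairing Yd Y) :=
  dualizable_of_unit_retract_general X Y u t hut hXY
end

section
/- Let C be a triangulated category equipped with a symmetric monoidal structure whose tensor product is exact (triangulated) in each variable, let D be an additive category, and let F : D ⥤ C be an additive functor admitting a right adjoint G : C ⥤ D. Assume that for every L in C, the essential image of the functor M ↦ F(M) ⊗ L is contained in the essential image closure of F. Then the thick subcategory of C generated by the objects F(M), for M ranging over D, is a tensor ideal: for every X in this thick subcategory and every L in C, the object X ⊗ L again lies in this thick subcategory. -/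
open CategoryTheory Category Limits Pretriangulated MonoidalCategory

variable {C D : Type*} [Category C] [Category D]

/-- The thick subcategory of a (pre)triangulated category `C` generated by the objects
`F.obj M` for `M : D`: the smallest class of objects containing the `F.obj M` and closed
under isomorphisms, shifts, retracts, and extensions. -/
inductive ThickGen [HasZeroObject C] [Preadditive C] [HasShift C ℤ]
    [∀ n : ℤ, (shiftFunctor C n).Additive] [Pretriangulated C] (F : D ⥤ C) : C → Prop
  | of (M : D) : ThickGen F (F.obj M)
  | of_iso {X Y : C} (e : X ≅ Y) : ThickGen F X → ThickGen F Y
  | shift {X : C} (n : ℤ) : ThickGen F X → ThickGen F (X⟦n⟧)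
  | retract {X Y : C} (i : X ⟶ Y) (r : Y ⟶ X) (h : i ≫ r = 𝟙 X) :
      ThickGen F Y → ThickGen F X
  | ext (T : Triangle C) (hT : T ∈ distTriang C) :
      ThickGen F T.obj₁ → ThickGen F T.obj₃ → ThickGen F T.obj₂

/-- Let `C` be a triangulated category with a symmetric monoidal structure whose tensor
product is triangulated in each variable, and `F : D ⥤ C` an additive functor with a right
adjoint `G` such that (in simplified form) every `F.obj M ⊗ L` is isomorphic to some
`F.obj M'`. Then the thick subcategory generated by the image of `F` is a tensor ideal. -/
theorem thickGen_tensor_ideal [HasZeroObject C] [Preadditive C] [HasShift C ℤ]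
    [∀ n : ℤ, (shiftFunctor C n).Additive] [Pretriangulated C]
    [MonoidalCategory C] [SymmetricCategory C] [Preadditive D]
    (htL : ∀ L : C, (tensorLeft L).CommShift ℤ)
    (htL' : ∀ L : C, let _ := htL L; (tensorLeft L).IsTriangulated)
    (htR : ∀ L : C, (tensorRight L).CommShift ℤ)
    (htR' : ∀ L : C, let _ := htR L; (tensorRight L).IsTriangulated)
    (F : D ⥤ C) [F.Additive] (G : C ⥤ D) (adj : F ⊣ G)
    (hproj : ∀ (M : D) (L : C), ∃ M' : D, Nonempty (F.obj M ⊗ L ≅ F.obj M')) :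
    ∀ (X L : C), ThickGen F X → ThickGen F (X ⊗ L) := by
  intro X L hX
  induction hX with
  | of M =>
    obtain ⟨M', ⟨e⟩⟩ := hproj M L
    exact ThickGen.of_iso e.symm (ThickGen.of M')
  | of_iso e _ ih =>
    exact ThickGen.of_iso ((tensorRight L).mapIso e) ih
  | shift n _ ih =>
    letI := htR L
    exact ThickGen.of_iso (((tensorRight L).commShiftIso n).app _).symm
      (ThickGen.shift n ih)
  | retract i r h _ ih =>
    exact ThickGen.retract ((tensorRight L).map i) ((tensorRight L).map r)
      (by rw [← Functor.map_comp, h]; exact (tensorRight L).map_id _) ih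
  | ext T hT _ _ ih1 ih3 =>
    letI := htR L
    letI : (tensorRight L).IsTriangulated := htR' L
    exact ThickGen.ext ((tensorRight L).mapTriangle.obj T)
      ((tensorRight L).map_distinguished T hT) ih1 ih3
end

section
/- Let C be a category with all small coproducts, and consider a pullback square of types: given functions f : T → S and p : U → S, let V := {(u, t) : U × T // p u = f t}, with projections q : V → T, (u,t) ↦ t, and g : V → U, (u,t) ↦ u. Then for every functor L : Discrete T ⥤ C, the canonical base change morphism Lan_g (L ∘ q) ⟶ (Lan_f L) ∘ p of functors Discrete U ⥤ C is an isomorphism. -/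
open CategoryTheory Limits

/-- Base change for left Kan extensions along functions of types: given a pullback square
of types with `f : T → S`, `p : U → S`, `V = {(u,t) // p u = f t}`, `q : V → T`,
`g : V → U`, and `C` a category with small coproducts, the canonical base change morphism
`Lan_g (L ∘ q) ⟶ (Lan_f L) ∘ p` is an isomorphism.  Pointwise, at each `u : U`, it is the
canonical morphism `∐_{v ∈ g⁻¹(u)} L(q v) ⟶ ∐_{t ∈ f⁻¹(p u)} L(t)` induced by the
bijection between the fiber of `g` at `u` and the fiber of `f` at `p u`. -/
theorem lan_base_change_isIso
    {T S U : Type u} (f : T → S) (p : U → S) {C : Type v} [Category.{w} C]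
    [HasCoproducts.{u} C] (L : Discrete T ⥤ C) (u : U) :
    IsIso (Sigma.desc
      (f := fun v : {v : {vt : U × T // p vt.1 = f vt.2} // v.1.1 = u} =>
        L.obj (Discrete.mk v.1.1.2))
      (fun v => Sigma.ι (fun t : {t : T // f t = p u} => L.obj (Discrete.mk t.1))
        ⟨v.1.1.2, v.1.2.symm.trans (congrArg p v.2)⟩)) := by
  refine ⟨Sigma.desc (fun t : {t : T // f t = p u} =>
    Sigma.ι (fun v : {v : {vt : U × T // p vt.1 = f vt.2} // v.1.1 = u} =>
      L.obj (Discrete.mk v.1.1.2)) ⟨⟨(u, t.1), t.2.symm⟩, rfl⟩), ?_, ?_⟩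
  · ext ⟨⟨⟨u', t⟩, h⟩, (hu : u' = u)⟩
    subst hu
    simp
  · ext t
    simp
end

section
/- Let A → B be a map of commutative rings such that B is a finitely generated projective A-module, and write B^∨ := Hom_A(B, A), regarded as a B-module via (b · φ)(x) = φ(b * x). Then for every B-module M and every A-module N there is an isomorphism of abelian groups Hom_A(M ⊗_B B^∨, N) ≅ Hom_B(M, B ⊗_A N), natural in both M and N. In other words, the functor M ↦ M ⊗_B B^∨ from B-modules to A-modules is left adjoint to the base change functor N ↦ B ⊗_A N from A-modules to B-modules. -/
/-!
The canonical map `B ⊗_A N → Hom_A(B^∨, N)`, `b ⊗ n ↦ (φ ↦ φ b • n)`, is bijective because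
`B` is finite projective: it is `dualTensorHom` for `B^∨` composed with `B ≅ B^∨∨`. It turns
multiplication by `s : B` on `B ⊗_A N` into precomposition with `s • -` on `B^∨`. Currying
identifies `Hom_A(M ⊗_B B^∨, N)` with the additive maps `M → Hom_A(B^∨, N)` that are `B`-linear
for this precomposition action, and composing with the inverse of the canonical map identifies
those with `Hom_B(M, B ⊗_A N)`. Both identifications are natural, which gives the adjunction.
-/

open CategoryTheory

variable (A B : Type u) [CommRing A] [CommRing B] [Algebra A B]

/-- The `B`-module structure on `B^∨ = Hom_A(B, A)` given by `(b • φ) x = φ (b * x)`. -/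
instance dualModuleStruct : Module B (Module.Dual A B) where
  smul b φ := φ ∘ₗ LinearMap.mul A B b
  one_smul φ := by ext x; show φ (1 * x) = φ x; rw [one_mul]
  mul_smul b c φ := by
    ext x; show φ (b * c * x) = φ (c * (b * x)); congr 1; ring
  smul_zero b := by
    ext x; show (0 : Module.Dual A B) (b * x) = (0 : Module.Dual A B) x; simp
  smul_add b φ ψ := by
    ext x; show (φ + ψ) (b * x) = φ (b * x) + ψ (b * x); simp
  add_smul b c φ := by
    ext x; show φ ((b + c) * x) = φ (b * x) + φ (c * x); rw [add_mul, map_add]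
  zero_smul φ := by ext x; show φ (0 * x) = 0; simp

namespace TensorDualAdjunction

open ModuleCat TensorProduct MonoidalCategory
open scoped ChangeOfRings

section ChangeOfRings

universe v w

variable {R : Type w} {S : Type v} [CommRing R] [CommRing S] {f : R →+* S}

lemma extendScalars_obj_induction {N : ModuleCat.{v} R} {P : (extendScalars f).obj N → Prop}
    (t : (extendScalars f).obj N) (zero : P 0) (tmul : ∀ (s : S) (n : N), P (s ⊗ₜ[R, f] n))
    (add : ∀ x y, P x → P y → P (x + y)) : P t :=
  TensorProduct.induction_on t zero tmul add

lemma restrictScalars_tensorObj_induction {X Y : ModuleCat.{v} S}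
    {P : (restrictScalars f).obj (X ⊗ Y) → Prop} (t : (restrictScalars f).obj (X ⊗ Y))
    (zero : P 0) (tmul : ∀ (x : X) (y : Y), P (x ⊗ₜ y)) (add : ∀ x y, P x → P y → P (x + y)) :
    P t :=
  TensorProduct.induction_on t zero tmul add

lemma restrictScalars_tensorObj_hom_ext {X Y : ModuleCat.{v} S} {N : ModuleCat.{v} R}
    {g g' : (restrictScalars f).obj (X ⊗ Y) ⟶ N}
    (h : ∀ (x : X) (y : Y), g (x ⊗ₜ y) = g' (x ⊗ₜ y)) : g = g' := by
  ext t
  induction t using restrictScalars_tensorObj_induction with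
  | zero => rw [map_zero, map_zero]
  | tmul x y => exact h x y
  | add t t' ht ht' => rw [map_add, map_add, ht, ht']

end ChangeOfRings

variable {A B}

lemma algebraMap_smul_dual (a : A) (φ : Module.Dual A B) : algebraMap A B a • φ = a • φ := by
  ext x
  change φ (algebraMap A B a * x) = a • φ x
  rw [← Algebra.smul_def, map_smul]

section Curry

variable {M : ModuleCat.{u} B} {N : ModuleCat.{u} A}

noncomputable def curry
    (h : (restrictScalars (algebraMap A B)).obj (M ⊗ of B (Module.Dual A B)) ⟶ N) :
    M →+ (Module.Dual A B →ₗ[A] N) where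
  toFun m :=
    { toFun φ := h (m ⊗ₜ φ)
      map_add' φ ψ := by rw [tmul_add]; exact map_add h.hom _ _
      map_smul' a φ := by
        rw [← algebraMap_smul_dual, tmul_smul]
        exact map_smul h.hom a _ }
  map_zero' := by ext φ; exact (congrArg h.hom (zero_tmul M φ)).trans (map_zero h.hom)
  map_add' m m' := by ext φ; exact (congrArg h.hom (add_tmul m m' φ)).trans (map_add h.hom _ _)

lemma curry_smul (h : (restrictScalars (algebraMap A B)).obj (M ⊗ of B (Module.Dual A B)) ⟶ N)
    (s : B) (m : M) : curry h (s • m) = curry h m ∘ₗ (LinearMap.mul A B s).dualMap :=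
  LinearMap.ext fun φ => congrArg h.hom (smul_tmul s m φ)

variable (g : M →+ (Module.Dual A B →ₗ[A] N))
  (hg : ∀ (s : B) (m : M), g (s • m) = g m ∘ₗ (LinearMap.mul A B s).dualMap)

noncomputable def uncurryAddHom :
    (restrictScalars (algebraMap A B)).obj (M ⊗ of B (Module.Dual A B)) →+ N :=
  liftAddHom (LinearMap.toAddMonoidHom'.comp g) fun s m φ => congrArg (· φ) (hg s m)

lemma uncurryAddHom_smul (a : A)
    (t : (restrictScalars (algebraMap A B)).obj (M ⊗ of B (Module.Dual A B))) :
    uncurryAddHom g hg (a • t) = a • uncurryAddHom g hg t := by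
  induction t using restrictScalars_tensorObj_induction with
  | zero => rw [smul_zero, map_zero, smul_zero]
  | tmul m φ =>
    change g (algebraMap A B a • m) φ = a • g m φ
    rw [hg, LinearMap.comp_apply]
    exact (congrArg _ (algebraMap_smul_dual a φ)).trans (map_smul _ a φ)
  | add t t' ht ht' => rw [smul_add, map_add, map_add, ht, ht', smul_add]

noncomputable def uncurry :
    (restrictScalars (algebraMap A B)).obj (M ⊗ of B (Module.Dual A B)) ⟶ N :=
  ofHom (X := (restrictScalars (algebraMap A B)).obj (M ⊗ of B (Module.Dual A B))) (Y := N)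
    { uncurryAddHom g hg with map_smul' := uncurryAddHom_smul g hg }

end Curry

def restrictScalarsSelfEquiv : (restrictScalars (algebraMap A B)).obj (of B B) ≃ₗ[A] B where
  toFun b := b
  invFun b := b
  map_add' _ _ := rfl
  map_smul' a b := (Algebra.smul_def a (show B from b)).symm
  left_inv _ := rfl
  right_inv _ := rfl

variable [Module.Finite A B] [Module.Projective A B]

/-- Only additive: the carrier of `(extendScalars _).obj N` carries no `A`-module instance. -/
noncomputable def extendScalarsEquivHomDual (N : ModuleCat.{u} A) :
    (extendScalars (algebraMap A B)).obj N ≃+ (Module.Dual A B →ₗ[A] N) :=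
  (TensorProduct.congr (restrictScalarsSelfEquiv ≪≫ₗ Module.evalEquiv A B) (LinearEquiv.refl A N)
    ≪≫ₗ dualTensorHomEquiv A (Module.Dual A B) N).toAddEquiv

lemma extendScalarsEquivHomDual_smul (N : ModuleCat.{u} A) (s : B)
    (t : (extendScalars (algebraMap A B)).obj N) :
    extendScalarsEquivHomDual N (s • t) =
      extendScalarsEquivHomDual N t ∘ₗ (LinearMap.mul A B s).dualMap := by
  induction t using extendScalars_obj_induction with
  | zero => rw [smul_zero, map_zero, LinearMap.zero_comp]
  | tmul b n => rfl
  | add t t' ht ht' => rw [smul_add, map_add, map_add, ht, ht', LinearMap.add_comp]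

lemma extendScalarsEquivHomDual_map {N N' : ModuleCat.{u} A} (g : N ⟶ N')
    (t : (extendScalars (algebraMap A B)).obj N) :
    extendScalarsEquivHomDual N' ((extendScalars (algebraMap A B)).map g t) =
      g.hom ∘ₗ extendScalarsEquivHomDual N t := by
  induction t using extendScalars_obj_induction with
  | zero => rw [map_zero, map_zero, map_zero, LinearMap.comp_zero]
  | tmul b n => ext φ; exact (map_smul g.hom (φ b) n).symm
  | add t t' ht ht' => rw [map_add, map_add, ht, ht', map_add, LinearMap.comp_add]

noncomputable def homEquiv (M : ModuleCat.{u} B) (N : ModuleCat.{u} A) :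
    ((restrictScalars (algebraMap A B)).obj (M ⊗ of B (Module.Dual A B)) ⟶ N) ≃
      (M ⟶ (extendScalars (algebraMap A B)).obj N) where
  toFun h := ofHom (X := M) (Y := (extendScalars (algebraMap A B)).obj N)
    { toFun m := (extendScalarsEquivHomDual N).symm (curry h m)
      map_add' m m' := by rw [map_add, map_add]
      map_smul' s m := (extendScalarsEquivHomDual N).injective <| by
        refine Eq.trans ?_ (extendScalarsEquivHomDual_smul N s _).symm
        rw [AddEquiv.apply_symm_apply, AddEquiv.apply_symm_apply, curry_smul] }
  invFun k := uncurry ((extendScalarsEquivHomDual N).toAddMonoidHom.comp k.hom.toAddMonoidHom)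
    fun s m => by
      change extendScalarsEquivHomDual N (k (s • m)) = _
      rw [map_smul, extendScalarsEquivHomDual_smul]
      rfl
  left_inv h := restrictScalars_tensorObj_hom_ext fun m φ =>
    congrArg (· φ) ((extendScalarsEquivHomDual N).apply_symm_apply (curry h m))
  right_inv k := by
    ext m
    exact (extendScalarsEquivHomDual N).symm_apply_apply (k m)

lemma extendScalarsEquivHomDual_homEquiv_apply {M : ModuleCat.{u} B} {N : ModuleCat.{u} A}
    (h : (restrictScalars (algebraMap A B)).obj (M ⊗ of B (Module.Dual A B)) ⟶ N) (m : M) :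
    extendScalarsEquivHomDual N (homEquiv M N h m) = curry h m :=
  (extendScalarsEquivHomDual N).apply_symm_apply _

variable (A B) in
noncomputable def adjunction :
    (tensorRight (of B (Module.Dual A B)) ⋙ restrictScalars (algebraMap A B)) ⊣
      extendScalars (algebraMap A B) :=
  Adjunction.mkOfHomEquiv
    { homEquiv
      homEquiv_naturality_left_symm _ _ :=
        restrictScalars_tensorObj_hom_ext fun _ _ => rfl
      homEquiv_naturality_right h g := by
        ext m
        refine (extendScalarsEquivHomDual _).injective ?_
        change _ = extendScalarsEquivHomDual _
          ((extendScalars (algebraMap A B)).map g (homEquiv _ _ h m))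
        rw [extendScalarsEquivHomDual_map, extendScalarsEquivHomDual_homEquiv_apply,
          extendScalarsEquivHomDual_homEquiv_apply]
        rfl }

end TensorDualAdjunction

/-- If `B` is a finitely generated projective `A`-module, then the functor
`M ↦ M ⊗_B B^∨` from `B`-modules to `A`-modules is left adjoint to the base change functor
`N ↦ B ⊗_A N` from `A`-modules to `B`-modules; i.e. there are isomorphisms
`Hom_A(M ⊗_B B^∨, N) ≅ Hom_B(M, B ⊗_A N)` natural in `M` and `N`. -/
theorem tensor_dual_adjoint_extendScalars
    [Module.Finite A B] [Module.Projective A B] :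
    Nonempty
      ((MonoidalCategory.tensorRight (ModuleCat.of B (Module.Dual A B)) ⋙
          ModuleCat.restrictScalars (algebraMap A B)) ⊣
        ModuleCat.extendScalars (algebraMap A B)) :=
  ⟨TensorDualAdjunction.adjunction A B⟩
end
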